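/- Let M be a finitely generated ℤ^d-graded S_A-module and let F ⪯ G ⪯ A be faces. Then a subset Z ⊆ qdeg M[∂^{−G}] is an irreducible component of qdeg M[∂^{−G}] if and only if Z is an irreducible component of qdeg M[∂^{−F}]. In particular, qdeg M[∂^{−G}] ⊆ qdeg M[∂^{−F}]. -/

import Mathlib

/-!
Common setup: `A` is a `d × n` integer matrix, given by its columns `a : Fin n → Lat d`,
with `ℤA = ℤ^d` (`SpansZ`) and `ℕA` pointed (`Pointed`).  Faces, semigroups, graded
modules, quasidegree sets, the dualizing complex `ω•_{S_A}` and the Ishida complexes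
`℧•_F` are formalized below; all cohomology statements are expressed via the
(ℤ^d-)graded components of these complexes.
-/

namespace GKZ

open scoped Classical

noncomputable section

abbrev Lat (d : ℕ) := Fin d → ℤ
abbrev CS (d : ℕ) := Fin d → ℂ
abbrev Laur (d : ℕ) := AddMonoidAlgebra ℂ (Lat d)

/-- Inclusion ℤ^d ⊆ ℂ^d. -/
def toC {d : ℕ} (α : Lat d) : CS d := fun i => (α i : ℂ)
/-- Inclusion ℤ^d ⊆ ℝ^d. -/
def toR {d : ℕ} (α : Lat d) : Fin d → ℝ := fun i => (α i : ℝ)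
/-- The monomial t^α in the Laurent polynomial ring ℂ[ℤ^d]. -/
def mono {d : ℕ} (α : Lat d) : Laur d := AddMonoidAlgebra.single α 1

variable {d n : ℕ}

/-- The affine semigroup ℕA generated by the columns of `A`. -/
def NA (a : Fin n → Lat d) : AddSubmonoid (Lat d) := AddSubmonoid.closure (Set.range a)

/-- ℕA is pointed: ℕA ∩ (−ℕA) = {0}. -/
def Pointed (a : Fin n → Lat d) : Prop := ∀ x ∈ NA a, -x ∈ NA a → x = 0

/-- ℤA = ℤ^d. -/
def SpansZ (a : Fin n → Lat d) : Prop :=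
  AddSubgroup.closure (Set.range a) = (⊤ : AddSubgroup (Lat d))

/-- The real cone ℝ₊F spanned by the columns indexed by `F`. -/
def cone (a : Fin n → Lat d) (F : Set (Fin n)) : Set (Fin d → ℝ) :=
  { x | ∃ c : Fin n → ℝ, (∀ i, 0 ≤ c i) ∧ (∀ i, i ∉ F → c i = 0) ∧ x = ∑ i, c i • toR (a i) }

/-- `F` is a face of `A`: ℝ₊F is a face of the cone ℝ₊A, and `F` consists of all the
columns of `A` lying on that face. -/
def IsFace (a : Fin n → Lat d) (F : Set (Fin n)) : Prop :=
  (∀ x y, x ∈ cone a Set.univ → y ∈ cone a Set.univ →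
      x + y ∈ cone a F → x ∈ cone a F ∧ y ∈ cone a F) ∧
  (∀ i, toR (a i) ∈ cone a F → i ∈ F)

/-- ℕF. -/
def NFace (a : Fin n → Lat d) (F : Set (Fin n)) : AddSubmonoid (Lat d) :=
  AddSubmonoid.closure (a '' F)

/-- ℤF. -/
def ZFace (a : Fin n → Lat d) (F : Set (Fin n)) : AddSubgroup (Lat d) :=
  AddSubgroup.closure (a '' F)

/-- ℂF ⊆ ℂ^d. -/
def CFace (a : Fin n → Lat d) (F : Set (Fin n)) : Submodule ℂ (CS d) :=
  Submodule.span ℂ (toC '' (a '' F))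

/-- d_F, the rank of ℤF. -/
def dimF (a : Fin n → Lat d) (F : Set (Fin n)) : ℕ :=
  Module.finrank ℤ (Submodule.span ℤ (a '' F))

/-- σ_F, the sum of the columns of F. -/
def sigmaF (a : Fin n → Lat d) (F : Set (Fin n)) : Lat d :=
  ∑ i : Fin n, if i ∈ F then a i else 0

/-- ε_A = a_1 + ⋯ + a_n. -/
def epsA (a : Fin n → Lat d) : Lat d := ∑ i : Fin n, a i

/-- ℕA − ℕF ⊆ ℤ^d. -/
def NAmNF (a : Fin n → Lat d) (F : Set (Fin n)) : Set (Lat d) :=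
  {γ | ∃ u ∈ NA a, ∃ v ∈ NFace a F, γ = u - v}

/-- ℕF − ℕA ⊆ ℤ^d. -/
def NFmNA (a : Fin n → Lat d) (F : Set (Fin n)) : Set (Lat d) :=
  {γ | ∃ u ∈ NFace a F, ∃ v ∈ NA a, γ = u - v}

/-- ℕF − ℕH ⊆ ℤ^d. -/
def NFmNH (a : Fin n → Lat d) (F H : Set (Fin n)) : Set (Lat d) :=
  {γ | ∃ u ∈ NFace a F, ∃ v ∈ NFace a H, γ = u - v}

/-- ℕA is normal: ℕA = ℤ^d ∩ ℝ₊A. -/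
def Normal (a : Fin n → Lat d) : Prop :=
  ∀ γ : Lat d, γ ∈ NA a ↔ toR γ ∈ cone a Set.univ

/-- The Zariski closure of a subset of ℂ^d. -/
def zClosure {d : ℕ} (T : Set (CS d)) : Set (CS d) :=
  {x | ∀ p : MvPolynomial (Fin d) ℂ, (∀ y ∈ T, MvPolynomial.eval y p = 0) →
    MvPolynomial.eval x p = 0}

def IsZClosed {d : ℕ} (Z : Set (CS d)) : Prop := zClosure Z ⊆ Z

/-- Irreducibility of a subset of ℂ^d in the Zariski topology. -/
def ZIrred {d : ℕ} (Z : Set (CS d)) : Prop :=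
  Z.Nonempty ∧ ∀ C₁ C₂ : Set (CS d), IsZClosed C₁ → IsZClosed C₂ →
    Z ⊆ C₁ ∪ C₂ → Z ⊆ C₁ ∨ Z ⊆ C₂

/-- Krull (topological) dimension of a subset of ℂ^d with the Zariski topology:
the Krull dimension of the poset of irreducible Zariski-closed subsets contained in it. -/
def zdim {d : ℕ} (Z : Set (CS d)) : WithBot ℕ∞ :=
  Order.krullDim {C : Set (CS d) // C ⊆ Z ∧ IsZClosed C ∧ ZIrred C}

/-- `Z` is an irreducible component of `W`: a maximal irreducible Zariski-closed subset. -/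
def IsIrredComp {d : ℕ} (Z W : Set (CS d)) : Prop :=
  Z ⊆ W ∧ IsZClosed Z ∧ ZIrred Z ∧
    ∀ Z' : Set (CS d), IsZClosed Z' → ZIrred Z' → Z ⊆ Z' → Z' ⊆ W → Z' = Z

/-- The type of faces of `A`. -/
def FaceT (a : Fin n → Lat d) := {G : Set (Fin n) // IsFace a G}

instance (a : Fin n → Lat d) : Finite (FaceT a) := by
  unfold FaceT; infer_instance

noncomputable instance (a : Fin n → Lat d) : Fintype (FaceT a) := Fintype.ofFinite _

/-- Degree set of the localization M[∂^{−G}] of the monomial module with degree set `E`: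
the set E − ℕG. -/
def locE (a : Fin n → Lat d) (E : Set (Lat d)) (G : Set (Fin n)) : Set (Lat d) :=
  {γ | ∃ f ∈ NFace a G, γ + f ∈ E}

/-- Functions supported on a subset, as a ℂ-submodule of the function space. -/
def funSupported {ι : Type*} (S : Set ι) : Submodule ℂ (ι → ℂ) where
  carrier := {c | ∀ i, i ∉ S → c i = 0}
  add_mem' := by
    intro x y hx hy i hi
    simp only [Set.mem_setOf_eq] at hx hy
    simp [Pi.add_apply, hx i hi, hy i hi]
  zero_mem' := by intro i _; rfl
  smul_mem' := by
    intro r x hx i hi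
    simp only [Set.mem_setOf_eq] at hx
    simp [Pi.smul_apply, hx i hi]

/-- The degree-γ part of the term of the Ishida complex ℧•_F(M) (base face `F`, monomial
module with degree set `E`) whose summands are indexed by the faces of absolute dimension
`j` (cohomological degree `j − d_F`): functions on the faces `G ⊇ F` with `d_G = j` and
`γ ∈ E − ℕG`. -/
def ishChain (a : Fin n → Lat d) (E : Set (Lat d)) (F : Set (Fin n)) (j : ℤ) (γ : Lat d) :
    Submodule ℂ (FaceT a → ℂ) :=
  funSupported {G : FaceT a | F ⊆ G.1 ∧ (dimF a G.1 : ℤ) = j ∧ γ ∈ locE a E G.1}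

/-- The differential of the Ishida complex (in each ℤ^d-degree): the component from a face
`G'` into a face `G''` covering it is `ε G' G''` times the natural localization map. -/
def ishDelta (a : Fin n → Lat d) (ε : Set (Fin n) → Set (Fin n) → ℂ) :
    (FaceT a → ℂ) →ₗ[ℂ] (FaceT a → ℂ) where
  toFun c := fun G'' => ∑ G' : FaceT a,
    if G'.1 ⊆ G''.1 ∧ dimF a G''.1 = dimF a G'.1 + 1 then ε G'.1 G''.1 * c G' else 0
  map_add' x y := by
    funext G''
    simp only [Pi.add_apply, ← Finset.sum_add_distrib]
    refine Finset.sum_congr rfl fun G' _ => ?_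
    by_cases h : G'.1 ⊆ G''.1 ∧ dimF a G''.1 = dimF a G'.1 + 1
    · simp [h, mul_add]
    · simp [h]
  map_smul' r x := by
    funext G''
    simp only [Pi.smul_apply, smul_eq_mul, RingHom.id_apply, Finset.mul_sum]
    refine Finset.sum_congr rfl fun G' _ => ?_
    by_cases h : G'.1 ⊆ G''.1 ∧ dimF a G''.1 = dimF a G'.1 + 1
    · simp only [h, and_self, if_true]; ring
    · simp [h]

/-- Degree-γ cocycles of the Ishida complex at absolute dimension `j`. -/
def ishZ (a : Fin n → Lat d) (E : Set (Lat d)) (ε : Set (Fin n) → Set (Fin n) → ℂ)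
    (F : Set (Fin n)) (j : ℤ) (γ : Lat d) : Submodule ℂ (FaceT a → ℂ) :=
  ishChain a E F j γ ⊓ LinearMap.ker (ishDelta a ε)

/-- Degree-γ coboundaries of the Ishida complex at absolute dimension `j`. -/
def ishB (a : Fin n → Lat d) (E : Set (Lat d)) (ε : Set (Fin n) → Set (Fin n) → ℂ)
    (F : Set (Fin n)) (j : ℤ) (γ : Lat d) : Submodule ℂ (FaceT a → ℂ) :=
  Submodule.map (ishDelta a ε) (ishChain a E F (j - 1) γ)

/-- The degree-γ component of the cohomology of the Ishida complex ℧•_F(M) at absolute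
dimension `j` (cohomological degree `j − d_F`). -/
abbrev ishH (a : Fin n → Lat d) (E : Set (Lat d)) (ε : Set (Fin n) → Set (Fin n) → ℂ)
    (F : Set (Fin n)) (j : ℤ) (γ : Lat d) :=
  ↥(ishZ a E ε F j γ) ⧸
    Submodule.comap (ishZ a E ε F j γ).subtype (ishB a E ε F j γ)

/-- Nonvanishing of the degree-γ component of the cohomology of the Ishida complex. -/
def ishHne (a : Fin n → Lat d) (E : Set (Lat d)) (ε : Set (Fin n) → Set (Fin n) → ℂ)
    (F : Set (Fin n)) (j : ℤ) (γ : Lat d) : Prop :=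
  ¬ (ishZ a E ε F j γ ≤ ishB a E ε F j γ)

/-- Degree-γ part of the term of ω•_{S_A} in cohomological degree `i`:
functions on the faces `G` with `d_{A/G} = i` and `γ ∈ ℕG − ℕA`. -/
def omChain (a : Fin n → Lat d) (i : ℤ) (γ : Lat d) : Submodule ℂ (FaceT a → ℂ) :=
  funSupported {G : FaceT a | (dimF a G.1 : ℤ) = (d : ℤ) - i ∧ γ ∈ NFmNA a G.1}

/-- Degree-γ part of the differential of ω•_{S_A}: the component from a face `G'` to a face
`G''` covered by it is `ε G' G''` times the natural projection ℂ{ℕG'−ℕA} → ℂ{ℕG''−ℕA}. -/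
def omDelta (a : Fin n → Lat d) (ε : Set (Fin n) → Set (Fin n) → ℂ) (γ : Lat d) :
    (FaceT a → ℂ) →ₗ[ℂ] (FaceT a → ℂ) where
  toFun c := fun G'' =>
    if γ ∈ NFmNA a G''.1 then
      ∑ G' : FaceT a,
        if G''.1 ⊆ G'.1 ∧ dimF a G'.1 = dimF a G''.1 + 1 then ε G'.1 G''.1 * c G' else 0
    else 0
  map_add' x y := by
    funext G''
    by_cases hγ : γ ∈ NFmNA a G''.1
    · simp only [Pi.add_apply, hγ, if_true, ← Finset.sum_add_distrib]
      refine Finset.sum_congr rfl fun G' _ => ?_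
      by_cases h : G''.1 ⊆ G'.1 ∧ dimF a G'.1 = dimF a G''.1 + 1
      · simp [h, mul_add]
      · simp [h]
    · simp [hγ]
  map_smul' r x := by
    funext G''
    by_cases hγ : γ ∈ NFmNA a G''.1
    · simp only [Pi.smul_apply, smul_eq_mul, RingHom.id_apply, hγ, if_true, Finset.mul_sum]
      refine Finset.sum_congr rfl fun G' _ => ?_
      by_cases h : G''.1 ⊆ G'.1 ∧ dimF a G'.1 = dimF a G''.1 + 1
      · simp only [h, and_self, if_true]; ring
      · simp [h]
    · simp [hγ]

/-- Degree-γ cocycles of ω•_{S_A} in cohomological degree `i`. -/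
def omZ (a : Fin n → Lat d) (ε : Set (Fin n) → Set (Fin n) → ℂ) (i : ℤ) (γ : Lat d) :
    Submodule ℂ (FaceT a → ℂ) :=
  omChain a i γ ⊓ LinearMap.ker (omDelta a ε γ)

/-- Degree-γ coboundaries of ω•_{S_A} in cohomological degree `i`. -/
def omB (a : Fin n → Lat d) (ε : Set (Fin n) → Set (Fin n) → ℂ) (i : ℤ) (γ : Lat d) :
    Submodule ℂ (FaceT a → ℂ) :=
  Submodule.map (omDelta a ε γ) (omChain a (i - 1) γ)

/-- Nonvanishing of H^i(ω•_{S_A})_γ. -/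
def omHne (a : Fin n → Lat d) (ε : Set (Fin n) → Set (Fin n) → ℂ) (i : ℤ) (γ : Lat d) : Prop :=
  ¬ (omZ a ε i γ ≤ omB a ε i γ)

/-- A ℤ^d-graded S_A-module, presented by its grading together with the (degree-shifting)
action of the monomials t^u, u ∈ ℕA. -/
structure GradedSAMod (a : Fin n → Lat d) (M : Type) [AddCommGroup M] [Module ℂ M] where
  decomp : Lat d → Submodule ℂ M
  internal : DirectSum.IsInternal decomp
  act : (u : Lat d) → u ∈ NA a → (M →ₗ[ℂ] M)
  act_zero : ∀ h0 : (0 : Lat d) ∈ NA a, act 0 h0 = LinearMap.id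
  act_add : ∀ (u : Lat d) (hu : u ∈ NA a) (v : Lat d) (hv : v ∈ NA a) (huv : u + v ∈ NA a),
    act (u + v) huv = (act u hu).comp (act v hv)
  act_grade : ∀ (u : Lat d) (hu : u ∈ NA a) (γ : Lat d), ∀ m ∈ decomp γ,
    act u hu m ∈ decomp (γ + u)

/-- Finite generation over S_A. -/
def GradedSAMod.FGmod {a : Fin n → Lat d} {M : Type} [AddCommGroup M] [Module ℂ M]
    (g : GradedSAMod a M) : Prop :=
  ∃ S : Finset M, ∀ m : M,
    m ∈ Submodule.span ℂ {x | ∃ u, ∃ hu : u ∈ NA a, ∃ s ∈ S, x = g.act u hu s}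

/-- Degrees of nonzero homogeneous elements of `M` that survive in the localization
`M[∂^{−H}]` (i.e. are killed by no power of t^{σ_H}). -/
def GradedSAMod.survTdeg {a : Fin n → Lat d} {M : Type} [AddCommGroup M] [Module ℂ M]
    (g : GradedSAMod a M) (H : Set (Fin n)) : Set (Lat d) :=
  {γ | ∃ m ∈ g.decomp γ, m ≠ 0 ∧ ∀ (k : ℕ) (hk : k • sigmaF a H ∈ NA a), g.act _ hk m ≠ 0}

/-- The quasidegree set of the localization `M[∂^{−H}]` of a finitely generated graded
module `M`: the union over `k` of the Zariski closures of the true degree sets of the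
finitely generated graded submodules t^{−kσ_H}·M of the localization. -/
def GradedSAMod.qdegLoc {a : Fin n → Lat d} {M : Type} [AddCommGroup M] [Module ℂ M]
    (g : GradedSAMod a M) (H : Set (Fin n)) : Set (CS d) :=
  ⋃ k : ℕ, zClosure (toC '' {γ : Lat d | γ + k • sigmaF a H ∈ g.survTdeg H})

/-- A ℂ-submodule is graded: it is spanned by its homogeneous elements. -/
def IsGradedSubC {d : ℕ} {M : Type} [AddCommGroup M] [Module ℂ M]
    (decomp : Lat d → Submodule ℂ M) (N : Submodule ℂ M) : Prop :=
  N = Submodule.span ℂ ((N : Set M) ∩ ⋃ γ : Lat d, (decomp γ : Set M))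

/-- A ℂ-submodule is an S_A-submodule: stable under the monomial action. -/
def IsStableSub {a : Fin n → Lat d} {M : Type} [AddCommGroup M] [Module ℂ M]
    (g : GradedSAMod a M) (N : Submodule ℂ M) : Prop :=
  ∀ (u : Lat d) (hu : u ∈ NA a), ∀ m ∈ N, g.act u hu m ∈ N

/-- The semigroup ring S_A = ℂ[ℕA] as a subalgebra of ℂ[ℤ^d]. -/
def SAlg (a : Fin n → Lat d) : Subalgebra ℂ (Laur d) :=
  Algebra.adjoin ℂ {x | ∃ α ∈ NA a, x = mono α}

/-- The monomial t^u, u ∈ ℕA, as an element of S_A. -/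
def smono (a : Fin n → Lat d) (u : Lat d) (hu : u ∈ NA a) : ↥(SAlg a) :=
  ⟨mono u, Algebra.subset_adjoin ⟨u, hu, rfl⟩⟩

/-- The underlying ℂ-vector space of the monomial module ℂ{E}: finitely supported
functions on `E`. -/
abbrev wMod (d : ℕ) (E : Set (Lat d)) := ↥(Finsupp.supported ℂ ℂ E)

/-- The action of the monomial t^w on ℂ{E}: shift the degree by `w`, truncate back to `E`. -/
def wAct {d : ℕ} (E : Set (Lat d)) (w : Lat d) : wMod d E →ₗ[ℂ] wMod d E :=
  (Finsupp.restrictDom ℂ ℂ E).comp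
    ((Finsupp.lmapDomain ℂ ℂ (fun γ => γ + w)).comp (Finsupp.supported ℂ ℂ E).subtype)

/-- The elements annihilated by some power of the ideal generated by the t^{a_i}, i ∉ F. -/
def torsionAt (a : Fin n → Lat d) (F : Set (Fin n)) {ML : Type} [AddCommGroup ML]
    [Module ℂ ML] (TL : (u : Lat d) → u ∈ NA a → (ML →ₗ[ℂ] ML)) : Set ML :=
  {y | ∃ k : ℕ, ∀ f : Fin k → Fin n, (∀ j, f j ∉ F) →
    ∀ h : (∑ j, a (f j)) ∈ NA a, TL (∑ j, a (f j)) h y = 0}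

/-- The toric ideal I_A ⊆ R_A = ℂ[∂_1,…,∂_n]. -/
def toricIdeal (a : Fin n → Lat d) : Ideal (MvPolynomial (Fin n) ℂ) :=
  RingHom.ker (MvPolynomial.aeval (fun i => mono (a i)) : MvPolynomial (Fin n) ℂ →ₐ[ℂ] Laur d)

/-- The ideal I_F^A = I_A + ⟨∂_i : a_i ∉ F⟩ of R_A. -/
def IFA (a : Fin n → Lat d) (F : Set (Fin n)) : Ideal (MvPolynomial (Fin n) ℂ) :=
  toricIdeal a ⊔ Ideal.span {p | ∃ i, i ∉ F ∧ p = MvPolynomial.X i}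

/-- An R_A-submodule is graded: it is spanned by its homogeneous elements. -/
def IsGradedSubR {d n : ℕ} {M : Type} [AddCommGroup M] [Module ℂ M]
    [Module (MvPolynomial (Fin n) ℂ) M]
    (decomp : Lat d → Submodule ℂ M) (N : Submodule (MvPolynomial (Fin n) ℂ) M) : Prop :=
  N = Submodule.span (MvPolynomial (Fin n) ℂ) ((N : Set M) ∩ ⋃ γ : Lat d, (decomp γ : Set M))

/-- `h` is the primitive integral support function of the facet `G`. -/
def IsPISF (a : Fin n → Lat d) (G : Set (Fin n)) (h : Lat d →ₗ[ℤ] ℤ) : Prop :=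
  (∃ x, h x = 1) ∧ (∀ i, 0 ≤ h (a i)) ∧ (∀ i, h (a i) = 0 ↔ i ∈ G)

/-- The ℂ-linear extension of an integral linear form to ℂ^d. -/
def hC {d : ℕ} (h : Lat d →ₗ[ℤ] ℤ) (β : CS d) : ℂ :=
  ∑ j : Fin d, β j * ((h (Pi.single j 1) : ℤ) : ℂ)

/-!
The quasidegree set of `M[∂^{-H}]` is the Zariski closure of the degrees of the homogeneous
elements not killed by a power of `t^{σ_H}`, and this closure is stable under the lines in
direction `σ_H`; hence so is each of its irreducible components.  Passing from `G` to the smaller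
face `F` only adds the degrees of homogeneous `t^{σ_G}`-torsion.  By Noetherianity this torsion
is generated by finitely many homogeneous elements, all killed by one `t^{K σ_G}`, so by Dickson's
lemma its degrees lie in finitely many affine subspaces `β + ℂ{a_i : i ∈ S}` with
`σ_G ∉ ℂ{a_i : i ∈ S}`.  An irreducible closed set between a component `Z` of
`qdeg M[∂^{-G}]` and `qdeg M[∂^{-F}]` lies in `qdeg M[∂^{-G}]` or in one of these subspaces; the
latter is impossible since `Z` contains a line in direction `σ_G`.
-/

open MvPolynomial in
lemma eval_aeval_X_add_C (p : MvPolynomial (Fin d) ℂ) (v y : CS d) :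
    eval y (aeval (fun i => X i + C (v i)) p) = eval (y + v) p := by
  induction p using MvPolynomial.induction_on <;> simp_all

open MvPolynomial in
lemma eval_aeval_line (p : MvPolynomial (Fin d) ℂ) (y c : CS d) (z : ℂ) :
    (aeval (fun i => Polynomial.C (y i) + Polynomial.C (c i) * Polynomial.X) p).eval z =
      eval (y + z • c) p := by
  induction p using MvPolynomial.induction_on with
  | C r => simp
  | add p q hp hq => simp [hp, hq]
  | mul_X p i hp =>
    simp only [map_mul, Polynomial.eval_mul, hp, aeval_X, eval_X, Polynomial.eval_add,
      Polynomial.eval_C, Polynomial.eval_X, Pi.add_apply, Pi.smul_apply, smul_eq_mul]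
    ring

lemma subset_zClosure (T : Set (CS d)) : T ⊆ zClosure T := fun x hx _ hp => hp x hx

lemma zClosure_mono {T T' : Set (CS d)} (h : T ⊆ T') : zClosure T ⊆ zClosure T' :=
  fun _ hx p hp => hx p fun y hy => hp y (h hy)

lemma zClosure_subset {T C : Set (CS d)} (h : T ⊆ C) (hC : IsZClosed C) : zClosure T ⊆ C :=
  (zClosure_mono h).trans hC

lemma isZClosed_zClosure (T : Set (CS d)) : IsZClosed (zClosure T) :=
  fun _ hx p hp => hx p fun _ hy => hy p hp

lemma isZClosed_empty : IsZClosed (∅ : Set (CS d)) := fun x hx => by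
  simpa using hx 1 (by simp)

lemma IsZClosed.union {C₁ C₂ : Set (CS d)} (h₁ : IsZClosed C₁) (h₂ : IsZClosed C₂) :
    IsZClosed (C₁ ∪ C₂) := by
  intro x hx
  by_contra hmem
  simp only [Set.mem_union, not_or] at hmem
  obtain ⟨p₁, hp₁, hx₁⟩ : ∃ p, (∀ y ∈ C₁, MvPolynomial.eval y p = 0) ∧
      MvPolynomial.eval x p ≠ 0 := by
    by_contra! h; exact hmem.1 (h₁ h)
  obtain ⟨p₂, hp₂, hx₂⟩ : ∃ p, (∀ y ∈ C₂, MvPolynomial.eval y p = 0) ∧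
      MvPolynomial.eval x p ≠ 0 := by
    by_contra! h; exact hmem.2 (h₂ h)
  have := hx (p₁ * p₂) (by rintro y (hy | hy) <;> simp [hp₁ y, hp₂ y, hy])
  rw [map_mul] at this
  exact mul_ne_zero hx₁ hx₂ this

lemma isZClosed_biUnion_finset {ι : Type*} (s : Finset ι) {C : ι → Set (CS d)}
    (h : ∀ i ∈ s, IsZClosed (C i)) : IsZClosed (⋃ i ∈ s, C i) := by
  induction s using Finset.induction_on with
  | empty => simpa using isZClosed_empty
  | insert i s _ ih =>
    rw [Finset.set_biUnion_insert]
    exact (h i (s.mem_insert_self i)).union (ih fun j hj => h j (Finset.mem_insert_of_mem hj))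

lemma ZIrred.exists_subset_of_subset_biUnion {Z : Set (CS d)} (hZ : ZIrred Z) {ι : Type*}
    (s : Finset ι) {C : ι → Set (CS d)} (h : ∀ i ∈ s, IsZClosed (C i))
    (hsub : Z ⊆ ⋃ i ∈ s, C i) : ∃ i ∈ s, Z ⊆ C i := by
  induction s using Finset.induction_on with
  | empty =>
    obtain ⟨x, hx⟩ := hZ.1
    simpa using hsub hx
  | insert i s _ ih =>
    have hs : ∀ j ∈ s, IsZClosed (C j) := fun j hj => h j (Finset.mem_insert_of_mem hj)
    rw [Finset.set_biUnion_insert] at hsub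
    rcases hZ.2 _ _ (h i (s.mem_insert_self i)) (isZClosed_biUnion_finset s hs) hsub with hi | hs'
    · exact ⟨i, s.mem_insert_self i, hi⟩
    · obtain ⟨j, hj, hZj⟩ := ih hs hs'
      exact ⟨j, Finset.mem_insert_of_mem hj, hZj⟩

lemma IsZClosed.preimage_add {C : Set (CS d)} (hC : IsZClosed C) (v : CS d) :
    IsZClosed {x | x + v ∈ C} := by
  intro x hx
  apply hC
  intro p hp
  rw [← eval_aeval_X_add_C]
  exact hx _ fun y hy => by rw [eval_aeval_X_add_C]; exact hp _ hy

lemma IsZClosed.add_smul_mem {C : Set (CS d)} (hC : IsZClosed C) {y c : CS d}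
    (h : {z : ℂ | y + z • c ∈ C}.Infinite) (z : ℂ) : y + z • c ∈ C := by
  apply hC
  intro p hp
  set q : Polynomial ℂ :=
    MvPolynomial.aeval (fun i => Polynomial.C (y i) + Polynomial.C (c i) * Polynomial.X) p
  have hq : q = 0 := q.eq_zero_of_infinite_isRoot <| h.mono fun w hw => by
    simpa [q, eval_aeval_line] using hp _ hw
  rw [← eval_aeval_line]
  change q.eval z = 0
  rw [hq, Polynomial.eval_zero]

lemma zClosure_add_smul_mem {T : Set (CS d)} {c : CS d} (hT : ∀ y ∈ T, y + c ∈ T)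
    {x : CS d} (hx : x ∈ zClosure T) (z : ℂ) : x + z • c ∈ zClosure T := by
  have hline : ∀ y ∈ T, y + z • c ∈ zClosure T := by
    intro y hy
    have hnat : ∀ m : ℕ, y + (m : ℂ) • c ∈ T := by
      intro m
      induction m with
      | zero => simpa using hy
      | succ m ih =>
        rw [Nat.cast_succ, add_smul, one_smul, ← add_assoc]
        exact hT _ ih
    refine (isZClosed_zClosure T).add_smul_mem (y := y) (c := c) ?_ z
    refine (Set.infinite_range_of_injective (Nat.cast_injective (R := ℂ))).mono ?_
    rintro _ ⟨m, rfl⟩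
    exact subset_zClosure T (hnat m)
  have hsub : zClosure T ⊆ {y | y + z • c ∈ zClosure T} :=
    zClosure_subset hline ((isZClosed_zClosure T).preimage_add _)
  exact hsub hx

/-- The closure of the union of the translates of `Z` along `c` is again irreducible (infinitely
many translates lie in the same member of a closed cover), so by maximality it is `Z`. -/
lemma IsIrredComp.add_smul_mem {Z W : Set (CS d)} {c : CS d} (hZ : IsIrredComp Z W)
    (hW : IsZClosed W) (hWc : ∀ x ∈ W, ∀ z : ℂ, x + z • c ∈ W) {x : CS d} (hx : x ∈ Z)
    (z : ℂ) : x + z • c ∈ Z := by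
  obtain ⟨hZW, -, hZirr, hmax⟩ := hZ
  set U : Set (CS d) := {y | ∃ z : ℂ, y + z • c ∈ Z}
  have hZU : Z ⊆ U := fun y hy => ⟨0, by simpa using hy⟩
  have hUW : U ⊆ W := by
    rintro y ⟨z, hz⟩
    simpa using hWc _ (hZW hz) (-z)
  have hU_sub : ∀ C, IsZClosed C → {z : ℂ | ∀ y ∈ Z, y + z • c ∈ C}.Infinite →
      zClosure U ⊆ C := by
    refine fun C hC hinf => zClosure_subset ?_ hC
    rintro y ⟨z, hz⟩
    simpa using hC.add_smul_mem (hinf.mono fun w (hw : ∀ y ∈ Z, y + w • c ∈ C) => hw _ hz) (-z)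
  have hUirr : ZIrred (zClosure U) := by
    refine ⟨hZirr.1.mono (hZU.trans (subset_zClosure U)), fun C₁ C₂ h₁ h₂ hcover => ?_⟩
    have htrans : ∀ z : ℂ, z ∈ {z : ℂ | ∀ y ∈ Z, y + z • c ∈ C₁} ∪
        {z : ℂ | ∀ y ∈ Z, y + z • c ∈ C₂} := by
      intro z
      refine hZirr.2 _ _ (h₁.preimage_add _) (h₂.preimage_add _) fun y hy => ?_
      exact hcover (subset_zClosure U ⟨-z, by simpa using hy⟩)
    rcases Set.infinite_union.mp (Set.infinite_univ.mono fun z _ => htrans z) with h | h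
    · exact Or.inl (hU_sub C₁ h₁ h)
    · exact Or.inr (hU_sub C₂ h₂ h)
  have hUZ : zClosure U = Z :=
    hmax _ (isZClosed_zClosure U) hUirr (hZU.trans (subset_zClosure U))
      (zClosure_subset hUW hW)
  exact hUZ ▸ subset_zClosure U ⟨-z, by simpa using hx⟩

lemma isZClosed_affineSubspace (A : AffineSubspace ℂ (CS d)) : IsZClosed (A : Set (CS d)) := by
  intro x hx
  obtain ⟨x₀, hx₀⟩ : (A : Set (CS d)).Nonempty := by
    by_contra! h
    simpa using hx 1 (by simp [h])
  by_contra hxA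
  rw [SetLike.mem_coe, ← AffineSubspace.vsub_right_mem_direction_iff_mem hx₀] at hxA
  obtain ⟨L, hLx, hLA⟩ := A.direction.exists_dual_map_eq_bot_of_notMem hxA inferInstance
  set p : MvPolynomial (Fin d) ℂ :=
    ∑ i, MvPolynomial.C (L fun j => if i = j then 1 else 0) * MvPolynomial.X i -
      MvPolynomial.C (L x₀)
  have hp : ∀ y, MvPolynomial.eval y p = L (y -ᵥ x₀) := by
    intro y
    simp [p, vsub_eq_sub, L.pi_apply_eq_sum_univ y, mul_comm]
  apply hLx
  rw [← hp]
  refine hx p fun y hy => ?_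
  rw [hp]
  exact LinearMap.le_ker_iff_map.mpr hLA (AffineSubspace.vsub_mem_direction hy hx₀)

lemma isIrredComp_iff_of_subset_union_affineSubspaces {Z W W' : Set (CS d)} {c : CS d}
    (hW : IsZClosed W) (hWc : ∀ x ∈ W, ∀ z : ℂ, x + z • c ∈ W) (hWW' : W ⊆ W')
    (P : Finset (AffineSubspace ℂ (CS d))) (hPc : ∀ A ∈ P, c ∉ A.direction)
    (hW' : W' ⊆ W ∪ ⋃ A ∈ P, (A : Set (CS d))) (hZ : Z ⊆ W) :
    IsIrredComp Z W ↔ IsIrredComp Z W' := by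
  constructor
  · intro hcomp
    obtain ⟨-, hZcl, hZirr, hmax⟩ := id hcomp
    refine ⟨hZ.trans hWW', hZcl, hZirr, fun Z' hZ'cl hZ'irr hZZ' hZ'W' => ?_⟩
    have hPcl : ∀ A ∈ P, IsZClosed (A : Set (CS d)) := fun A _ => isZClosed_affineSubspace A
    rcases hZ'irr.2 _ _ hW (isZClosed_biUnion_finset P hPcl) (hZ'W'.trans hW') with h | h
    · exact hmax Z' hZ'cl hZ'irr hZZ' h
    · obtain ⟨A, hA, hZ'A⟩ := hZ'irr.exists_subset_of_subset_biUnion P hPcl h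
      obtain ⟨x, hx⟩ := hZirr.1
      have hxc : x + (1 : ℂ) • c ∈ Z := hcomp.add_smul_mem hW hWc hx 1
      refine absurd ?_ (hPc A hA)
      simpa using AffineSubspace.vsub_mem_direction (hZ'A (hZZ' hxc)) (hZ'A (hZZ' hx))
  · rintro ⟨-, hZcl, hZirr, hmax⟩
    exact ⟨hZ, hZcl, hZirr, fun Z' h₁ h₂ h₃ h₄ => hmax Z' h₁ h₂ h₃ (h₄.trans hWW')⟩

@[simp] lemma toC_add (α β : Lat d) : toC (α + β) = toC α + toC β := by
  funext i; simp [toC]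

@[simp] lemma toC_nsmul (k : ℕ) (α : Lat d) : toC (k • α) = (k : ℂ) • toC α := by
  funext i; simp [toC]

@[simp] lemma toC_sum {ι : Type*} (s : Finset ι) (f : ι → Lat d) :
    toC (∑ i ∈ s, f i) = ∑ i ∈ s, toC (f i) := by
  funext j; simp [toC]

def colComb (a : Fin n → Lat d) : (Fin n → ℕ) →+ Lat d where
  toFun e := ∑ i, e i • a i
  map_zero' := by simp
  map_add' e f := by simp only [Pi.add_apply, add_nsmul, Finset.sum_add_distrib]

lemma colComb_apply (a : Fin n → Lat d) (e : Fin n → ℕ) : colComb a e = ∑ i, e i • a i := rfl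

lemma mem_NA_iff {a : Fin n → Lat d} {u : Lat d} : u ∈ NA a ↔ ∃ e, colComb a e = u := by
  simp [NA, AddSubmonoid.mem_closure_range_iff_of_fintype, colComb_apply, eq_comm]

lemma colComb_mem_NA (a : Fin n → Lat d) (e : Fin n → ℕ) : colComb a e ∈ NA a :=
  mem_NA_iff.mpr ⟨e, rfl⟩

lemma sigmaF_mem_NA (a : Fin n → Lat d) (H : Set (Fin n)) : sigmaF a H ∈ NA a :=
  sum_mem fun i _ => by
    split_ifs
    exacts [AddSubmonoid.subset_closure ⟨i, rfl⟩, zero_mem _]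

lemma sigmaF_eq_add_of_subset (a : Fin n → Lat d) {F G : Set (Fin n)} (hFG : F ⊆ G) :
    sigmaF a G = sigmaF a (G \ F) + sigmaF a F := by
  simp only [sigmaF, ← Finset.sum_add_distrib]
  refine Finset.sum_congr rfl fun i _ => ?_
  by_cases hF : i ∈ F
  · simp [hF, hFG hF]
  · by_cases hG : i ∈ G <;> simp [hF, hG]

/-- Apply a `ℚ`-linear retraction `ℂ → ℚ` to the complex coefficients. -/
lemma exists_rat_coeffs_of_toC_mem_CFace {a : Fin n → Lat d} {σ : Lat d} {S : Set (Fin n)}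
    (h : toC σ ∈ CFace a S) :
    ∃ q : Fin n → ℚ, (∀ i ∉ S, q i = 0) ∧ ∀ j, (σ j : ℚ) = ∑ i, q i * a i j := by
  rw [CFace, Set.image_image, Finsupp.mem_span_image_iff_linearCombination] at h
  obtain ⟨l, hlS, hl⟩ := h
  obtain ⟨π, hπ⟩ := (Algebra.linearMap ℚ ℂ).exists_leftInverse_of_injective
    (LinearMap.ker_eq_bot.mpr (algebraMap ℚ ℂ).injective)
  have hπq : ∀ r : ℚ, π r = r := fun r => LinearMap.congr_fun hπ r
  refine ⟨fun i => π (l i), fun i hi => by simp [(Finsupp.mem_supported' ℂ l).mp hlS i hi], ?_⟩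
  intro j
  have hj := congrFun hl j
  simp only [Finsupp.linearCombination_apply, Finsupp.sum_fintype, zero_smul, implies_true,
    Finset.sum_apply, Pi.smul_apply, smul_eq_mul, toC] at hj
  have hterm : ∀ i, l i * ((a i j : ℤ) : ℂ) = ((a i j : ℤ) : ℚ) • l i := fun i => by
    rw [Rat.smul_def, mul_comm]; push_cast; rfl
  have := congrArg π hj
  rw [← Rat.cast_intCast, hπq] at this
  simpa [map_sum, hterm, map_smul, mul_comm] using this.symm

lemma exists_int_relation_of_toC_mem_CFace {a : Fin n → Lat d} {σ : Lat d} {S : Set (Fin n)}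
    (h : toC σ ∈ CFace a S) :
    ∃ D : ℕ, 0 < D ∧ ∃ z : Fin n → ℤ, (∀ i ∉ S, z i = 0) ∧ (D : ℤ) • σ = ∑ i, z i • a i := by
  obtain ⟨q, hqS, hq⟩ := exists_rat_coeffs_of_toC_mem_CFace h
  set D : ℕ := ∏ i, (q i).den
  set z : Fin n → ℤ := fun i => (q i).num * ∏ j ∈ Finset.univ.erase i, ((q j).den : ℤ)
  have hz : ∀ i, (z i : ℚ) = D * q i := fun i => by
    rw [Nat.cast_prod, ← Finset.mul_prod_erase _ _ (Finset.mem_univ i)]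
    push_cast [z]
    rw [← Rat.mul_den_eq_num]
    ring
  refine ⟨D, Finset.prod_pos fun i _ => (q i).pos, z, fun i hi => by simp [z, hqS i hi], ?_⟩
  funext j
  have := congrArg ((D : ℚ) * ·) (hq j)
  simp only [Finset.mul_sum, ← mul_assoc, ← hz] at this
  simp only [Pi.smul_apply, Finset.sum_apply, smul_eq_mul]
  exact_mod_cast this

def cell (w : Fin n → ℕ) (S : Set (Fin n)) : Set (Fin n → ℕ) := {e | ∀ i ∉ S, e i = w i}

/-- For `e ∉ I`, freeze one coordinate where `e` lies below `g`, for each of the finitely many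
(Dickson) minimal elements `g` of `I`; these coordinates of `e` are bounded. -/
lemma _root_.IsUpperSet.exists_finset_cell_cover {I : Set (Fin n → ℕ)} (hI : IsUpperSet I) :
    ∃ C : Finset ((Fin n → ℕ) × Set (Fin n)),
      (∀ c ∈ C, Disjoint (cell c.1 c.2) I) ∧ Iᶜ ⊆ ⋃ c ∈ C, cell c.1 c.2 := by
  have hfin : {g | Minimal (· ∈ I) g}.Finite :=
    WellQuasiOrderedLE.finite_of_isAntichain (setOfPred_minimal_antichain _)
  set B : ℕ := hfin.toFinset.sup fun g => Finset.univ.sup g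
  have hgB : ∀ g, Minimal (· ∈ I) g → ∀ i, g i ≤ B := fun g hg i =>
    (Finset.le_sup (f := g) (Finset.mem_univ i)).trans
      (Finset.le_sup (f := fun g => Finset.univ.sup g) (hfin.mem_toFinset.mpr hg))
  refine ⟨((Fintype.piFinset fun _ => Finset.range (B + 1)) ×ˢ Finset.univ).filter
    fun c => Disjoint (cell c.1 c.2) I, fun c hc => (Finset.mem_filter.mp hc).2, fun e he => ?_⟩
  have hχ : ∀ g, Minimal (· ∈ I) g → ∃ i, e i < g i := fun g hg => by
    by_contra! hge
    exact he (hI (fun i => hge i) hg.prop)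
  choose χ hχ using hχ
  set S : Set (Fin n) := {i | ∀ g hg, χ g hg ≠ i}
  have hdisj : Disjoint (cell (fun i => min (e i) B) S) I := by
    refine Set.disjoint_left.mpr fun e' he' he'I => ?_
    obtain ⟨g, hge', hg⟩ := exists_minimal_le_of_wellFoundedLT (· ∈ I) e' he'I
    have hχS : χ g hg ∉ S := fun h => h g hg rfl
    have := hge' (χ g hg)
    rw [he' _ hχS] at this
    exact absurd (hχ g hg) (not_lt.mpr ((min_le_left _ _).trans' this))
  refine Set.mem_biUnion (x := ((fun i => min (e i) B), S)) ?_ fun i hi => ?_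
  · simp only [Finset.mem_coe, Finset.mem_filter, Finset.mem_product, Fintype.mem_piFinset,
      Finset.mem_range, Finset.mem_univ, and_true]
    exact ⟨fun i => Nat.lt_succ_of_le (min_le_right _ _), hdisj⟩
  · simp only [S, Set.mem_ofPred_eq, not_forall, not_not] at hi
    obtain ⟨g, hg, rfl⟩ := hi
    exact (min_eq_left ((hχ g hg).le.trans (hgB g hg _))).symm

lemma toC_colComb_sub_mem_CFace (a : Fin n → Lat d) {e w : Fin n → ℕ} {S : Set (Fin n)}
    (he : e ∈ cell w S) : toC (colComb a e) - toC (colComb a w) ∈ CFace a S := by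
  simp only [colComb_apply, toC_sum, toC_nsmul, ← Finset.sum_sub_distrib, ← sub_smul]
  refine Submodule.sum_mem _ fun i _ => ?_
  by_cases hi : i ∈ S
  · exact Submodule.smul_mem _ _ (Submodule.subset_span ⟨a i, ⟨i, hi, rfl⟩, rfl⟩)
  · simp [he i hi]

/-- Otherwise an integral relation `D • σ = ∑ z i • a i` supported on `S` moves `w` to the
point `w + K • z⁺` of the cell, which lands in `K • σ + ℕA`. -/
lemma toC_not_mem_CFace_of_disjoint_cell {a : Fin n → Lat d} {σ : Lat d} (hσ : σ ∈ NA a)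
    (K : ℕ) {w : Fin n → ℕ} {S : Set (Fin n)}
    (hdisj : Disjoint (cell w S) {e | ∃ v ∈ NA a, colComb a e = K • σ + v}) :
    toC σ ∉ CFace a S := by
  intro h
  obtain ⟨D, hD, z, hzS, hrel⟩ := exists_int_relation_of_toC_mem_CFace h
  obtain ⟨D, rfl⟩ : ∃ D', D = D' + 1 := ⟨D - 1, by omega⟩
  set p : Fin n → ℕ := fun i => (z i).toNat
  set q : Fin n → ℕ := fun i => (-z i).toNat
  have hpq : colComb a p = (D + 1) • σ + colComb a q := by
    rw [← sub_eq_iff_eq_add, ← natCast_zsmul, hrel, colComb_apply, colComb_apply,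
      ← Finset.sum_sub_distrib]
    refine Finset.sum_congr rfl fun i _ => ?_
    rw [← natCast_zsmul, ← natCast_zsmul, ← sub_smul, Int.toNat_sub_toNat_neg]
  refine Set.disjoint_left.mp hdisj (show w + K • p ∈ cell w S from fun i hi => by
    simp [p, hzS i hi]) ?_
  refine ⟨K • (D • σ) + colComb a w + K • colComb a q, ?_, ?_⟩
  · exact add_mem (add_mem (nsmul_mem (nsmul_mem hσ D) K) (colComb_mem_NA a w))
      (nsmul_mem (colComb_mem_NA a q) K)
  · rw [map_add, map_nsmul, hpq, add_nsmul, one_nsmul, smul_add, smul_add]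
    abel

lemma _root_.DirectSum.IsInternal.eq_of_mem_of_mem {ι R N : Type*} [DecidableEq ι] [Semiring R]
    [AddCommMonoid N] [Module R N] {𝒜 : ι → Submodule R N} (h : DirectSum.IsInternal 𝒜)
    {i j : ι} {x : N} (hi : x ∈ 𝒜 i) (hj : x ∈ 𝒜 j) (hx : x ≠ 0) : i = j := by
  by_contra hij
  exact hx (Submodule.disjoint_def.mp (h.submodule_iSupIndep.pairwiseDisjoint hij) x hi hj)

lemma _root_.DirectSum.IsInternal.exists_mem_ne_zero_of_mem_span {ι R N : Type*} [DecidableEq ι]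
    [Semiring R] [AddCommMonoid N] [Module R N] {𝒜 : ι → Submodule R N}
    (h : DirectSum.IsInternal 𝒜) {S : Set N} (hS : ∀ x ∈ S, ∃ j, x ∈ 𝒜 j) {i : ι} {m : N}
    (hm : m ∈ 𝒜 i) (hm0 : m ≠ 0) (hmS : m ∈ Submodule.span R S) :
    ∃ x ∈ S, x ∈ 𝒜 i ∧ x ≠ 0 := by
  let _ : DirectSum.Decomposition 𝒜 := h.chooseDecomposition
  set π : N →ₗ[R] N := (𝒜 i).subtype ∘ₗ DirectSum.component R ι (fun j => 𝒜 j) i ∘ₗ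
    (DirectSum.decomposeLinearEquiv 𝒜).toLinearMap
  have hπ : ∀ {j : ι} {x : N}, x ∈ 𝒜 j → π x = if j = i then x else 0 := by
    intro j x hx
    split_ifs with hji
    · subst hji; exact DirectSum.decompose_of_mem_same 𝒜 hx
    · exact DirectSum.decompose_of_mem_ne 𝒜 hx hji
  by_contra! hcon
  have hker : Submodule.span R S ≤ LinearMap.ker π := Submodule.span_le.mpr fun x hx => by
    obtain ⟨j, hj⟩ := hS x hx
    by_cases hji : j = i
    · subst hji; simp [hcon x hx hj]
    · simp [hπ hj, hji]
  exact hm0 (by simpa [hπ hm] using hker hmS)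

namespace GradedSAMod

variable {a : Fin n → Lat d} {M : Type} [AddCommGroup M] [Module ℂ M] (g : GradedSAMod a M)

lemma act_add_apply {u v : Lat d} (hu : u ∈ NA a) (hv : v ∈ NA a) (huv : u + v ∈ NA a)
    (m : M) : g.act (u + v) huv m = g.act u hu (g.act v hv m) := by
  rw [g.act_add u hu v hv huv]
  rfl

lemma act_congr {u v : Lat d} (h : u = v) (hu : u ∈ NA a) (hv : v ∈ NA a) (m : M) :
    g.act u hu m = g.act v hv m := by
  subst h
  rfl

/-- `m` vanishes in the localization of `M` at `t^σ`. -/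
def IsTorsion (σ : Lat d) (m : M) : Prop := ∃ (k : ℕ) (hk : k • σ ∈ NA a), g.act _ hk m = 0

lemma IsTorsion.of_eq_add {σ σ' τ : Lat d} (hτ : τ ∈ NA a) (hσ : σ ∈ NA a) (h : σ' = τ + σ)
    {m : M} (hm : g.IsTorsion σ m) : g.IsTorsion σ' m := by
  obtain ⟨k, hk', hk⟩ := hm
  have hτk := nsmul_mem hτ k
  have hσk := nsmul_mem hσ k
  refine ⟨k, h ▸ nsmul_mem (add_mem hτ hσ) k, ?_⟩
  rw [g.act_congr (by rw [h, smul_add]) _ (add_mem hτk hσk), g.act_add_apply hτk hσk, hk,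
    map_zero]

lemma act_nsmul_eq_zero_of_le {σ : Lat d} (hσ : σ ∈ NA a) {k K : ℕ} (hkK : k ≤ K) {m : M}
    (hm : g.act (k • σ) (nsmul_mem hσ k) m = 0) : g.act (K • σ) (nsmul_mem hσ K) m = 0 := by
  obtain ⟨j, rfl⟩ := Nat.exists_eq_add_of_le hkK
  rw [g.act_congr (by rw [add_comm, add_nsmul]) _ (add_mem (nsmul_mem hσ j) (nsmul_mem hσ k)),
    g.act_add_apply (nsmul_mem hσ j) (nsmul_mem hσ k), hm, map_zero]

lemma mem_survTdeg_iff {H : Set (Fin n)} {γ : Lat d} :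
    γ ∈ g.survTdeg H ↔ ∃ m ∈ g.decomp γ, m ≠ 0 ∧ ¬ g.IsTorsion (sigmaF a H) m := by
  simp [survTdeg, IsTorsion]

lemma survTdeg_anti {F G : Set (Fin n)} (hFG : F ⊆ G) : g.survTdeg G ⊆ g.survTdeg F := by
  simp only [Set.subset_def, mem_survTdeg_iff]
  rintro γ ⟨m, hm, hm0, hG⟩
  exact ⟨m, hm, hm0, fun hF => hG (hF.of_eq_add g (sigmaF_mem_NA a _) (sigmaF_mem_NA a F)
    (sigmaF_eq_add_of_subset a hFG))⟩

lemma add_sigmaF_mem_survTdeg {H : Set (Fin n)} {γ : Lat d} (hγ : γ ∈ g.survTdeg H) :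
    γ + sigmaF a H ∈ g.survTdeg H := by
  obtain ⟨m, hm, hm0, hsurv⟩ := hγ
  have hσ := sigmaF_mem_NA a H
  refine ⟨g.act _ hσ m, g.act_grade _ _ _ m hm, ?_, fun k hk => ?_⟩
  · rw [← g.act_congr (one_nsmul _) (nsmul_mem hσ 1)]
    exact hsurv 1 _
  · rw [← g.act_add_apply hk hσ (add_mem hk hσ),
      g.act_congr (succ_nsmul _ k).symm _ (nsmul_mem hσ (k + 1))]
    exact hsurv (k + 1) _

lemma toC_add_sigmaF_mem (H : Set (Fin n)) :
    ∀ y ∈ toC '' g.survTdeg H, y + toC (sigmaF a H) ∈ toC '' g.survTdeg H := by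
  rintro _ ⟨γ, hγ, rfl⟩
  exact ⟨_, g.add_sigmaF_mem_survTdeg hγ, toC_add _ _⟩

lemma qdegLoc_eq (H : Set (Fin n)) : g.qdegLoc H = zClosure (toC '' g.survTdeg H) := by
  refine subset_antisymm (Set.iUnion_subset fun k => zClosure_subset ?_ (isZClosed_zClosure _))
    (Set.subset_iUnion_of_subset 0 (by simp))
  rintro _ ⟨γ, hγ, rfl⟩
  have := zClosure_add_smul_mem (g.toC_add_sigmaF_mem H) (subset_zClosure _ ⟨_, hγ, rfl⟩)
    (-(k : ℂ))
  rwa [toC_add, toC_nsmul, add_assoc, ← add_smul, add_neg_cancel, zero_smul, add_zero] at this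

def monoSpan (T : Set M) : Submodule ℂ M :=
  Submodule.span ℂ {x | ∃ u, ∃ hu : u ∈ NA a, ∃ s ∈ T, x = g.act u hu s}

lemma act_mem_monoSpan {T : Set M} {u : Lat d} (hu : u ∈ NA a) {m : M}
    (hm : m ∈ g.monoSpan T) : g.act u hu m ∈ g.monoSpan T := by
  refine (Submodule.span_le (p := (g.monoSpan T).comap (g.act u hu)) |>.mpr ?_) hm
  rintro _ ⟨v, hv, s, hs, rfl⟩
  exact Submodule.subset_span ⟨u + v, add_mem hu hv, s, hs, (g.act_add_apply hu hv _ s).symm⟩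

/-- `M` as a module over `R_A = ℂ[∂_1, …, ∂_n]`, with `∂_i` acting as `t^{a_i}`. -/
def polyAct : MvPolynomial (Fin n) ℂ →ₐ[ℂ] Module.End ℂ M :=
  AddMonoidAlgebra.lift ℂ (Module.End ℂ M) (Fin n →₀ ℕ)
    { toFun := fun e => g.act (colComb a ⇑(Multiplicative.toAdd e)) (colComb_mem_NA a _)
      map_one' := by
        change _ = LinearMap.id
        rw [← g.act_zero (zero_mem _)]
        exact LinearMap.ext (g.act_congr (by simp) _ _)
      map_mul' := fun e f => LinearMap.ext fun m => by
        rw [Module.End.mul_apply,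
          ← g.act_add_apply _ _ (add_mem (colComb_mem_NA a _) (colComb_mem_NA a _))]
        exact g.act_congr (by simp) _ _ m }

lemma polyAct_monomial (e : Fin n →₀ ℕ) (c : ℂ) (m : M) :
    g.polyAct (MvPolynomial.monomial e c) m = c • g.act (colComb a ⇑e) (colComb_mem_NA a _) m := by
  rw [polyAct, ← MvPolynomial.single_eq_monomial, AddMonoidAlgebra.lift_single]
  rfl

lemma polyAct_monomial_one (e : Fin n → ℕ) (m : M) :
    g.polyAct (MvPolynomial.monomial (Finsupp.equivFunOnFinite.symm e) 1) m =
      g.act (colComb a e) (colComb_mem_NA a e) m := by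
  rw [polyAct_monomial, one_smul]
  rfl

lemma polyAct_C (c : ℂ) (m : M) : g.polyAct (MvPolynomial.C c) m = c • m := by
  rw [← MvPolynomial.algebraMap_eq, AlgHom.commutes]
  rfl

lemma polyAct_mem_monoSpan {T : Set M} (p : MvPolynomial (Fin n) ℂ) {m : M}
    (hm : m ∈ g.monoSpan T) : g.polyAct p m ∈ g.monoSpan T := by
  induction p using MvPolynomial.induction_on' with
  | monomial e c =>
    rw [polyAct_monomial]
    exact Submodule.smul_mem _ c (g.act_mem_monoSpan _ hm)
  | add p q hp hq =>
    rw [map_add, LinearMap.add_apply]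
    exact add_mem hp hq

/-- Noetherianity of `R_A`. -/
lemma exists_finset_subset_monoSpan (hfg : g.FGmod) (H : Set M) :
    ∃ T : Finset M, ↑T ⊆ H ∧ H ⊆ g.monoSpan T := by
  let _ : Module (MvPolynomial (Fin n) ℂ) M := Module.compHom M g.polyAct.toRingHom
  have hpoly : ∀ T : Set M, ∀ m ∈ Submodule.span (MvPolynomial (Fin n) ℂ) T, m ∈ g.monoSpan T := by
    intro T m hm
    induction hm using Submodule.span_induction with
    | mem x hx => exact Submodule.subset_span ⟨0, zero_mem _, x, hx, by rw [g.act_zero]; rfl⟩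
    | zero => exact zero_mem _
    | add x y _ _ hx hy => exact add_mem hx hy
    | smul p x _ hx => exact g.polyAct_mem_monoSpan p hx
  have hmono : ∀ T : Set M, ∀ m ∈ g.monoSpan T, m ∈ Submodule.span (MvPolynomial (Fin n) ℂ) T := by
    intro T m hm
    induction hm using Submodule.span_induction with
    | mem x hx =>
      obtain ⟨u, hu, s, hs, rfl⟩ := hx
      obtain ⟨e, rfl⟩ := mem_NA_iff.mp hu
      rw [← g.polyAct_monomial_one]
      exact Submodule.smul_mem _ _ (Submodule.subset_span hs)
    | zero => exact zero_mem _
    | add x y _ _ hx hy => exact add_mem hx hy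
    | smul c x _ hx =>
      rw [← g.polyAct_C]
      exact Submodule.smul_mem _ _ hx
  obtain ⟨S, hS⟩ := hfg
  have : Module.Finite (MvPolynomial (Fin n) ℂ) M :=
    ⟨⟨S, eq_top_iff.mpr fun m _ => hmono S m (hS m)⟩⟩
  obtain ⟨T, hTH, hT⟩ :=
    (Submodule.fg_span_iff_fg_span_finset_subset H).mp
      (IsNoetherian.noetherian (R := MvPolynomial (Fin n) ℂ) _)
  exact ⟨T, hTH, fun m hm => hpoly T m (hT ▸ Submodule.subset_span hm)⟩

/-- The `t^σ`-torsion is generated by finitely many homogeneous elements, all killed by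
`t^{K σ}`. -/
lemma exists_torsion_degrees (hfg : g.FGmod) {σ : Lat d} (hσ : σ ∈ NA a) :
    ∃ (K : ℕ) (Bs : Finset (Lat d)), ∀ γ m, m ∈ g.decomp γ → m ≠ 0 → g.IsTorsion σ m →
      ∃ β ∈ Bs, ∃ u ∈ NA a, γ = β + u ∧ ¬ ∃ v ∈ NA a, u = K • σ + v := by
  obtain ⟨T, hTH, hHT⟩ :=
    g.exists_finset_subset_monoSpan hfg {m | (∃ β, m ∈ g.decomp β) ∧ g.IsTorsion σ m}
  choose! deg hdeg using fun x (hx : x ∈ T) => (hTH hx).1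
  choose! k hk' hk using fun x (hx : x ∈ T) => (hTH hx).2
  refine ⟨T.sup k, T.image deg, fun γ m hm hm0 htor => ?_⟩
  have hS : ∀ y ∈ {x | ∃ u, ∃ hu : u ∈ NA a, ∃ s ∈ (T : Set M), x = g.act u hu s},
      ∃ β, y ∈ g.decomp β := by
    rintro _ ⟨u, hu, x, hx, rfl⟩
    exact ⟨_, g.act_grade _ _ _ _ (hdeg x hx)⟩
  obtain ⟨_, ⟨u, hu, x, hx, rfl⟩, hγ, hne⟩ :=
    DirectSum.IsInternal.exists_mem_ne_zero_of_mem_span g.internal hS hm hm0 (hHT ⟨⟨γ, hm⟩, htor⟩)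
  refine ⟨deg x, Finset.mem_image_of_mem _ hx, u, hu,
    DirectSum.IsInternal.eq_of_mem_of_mem g.internal hγ (g.act_grade _ _ _ _ (hdeg x hx)) hne, ?_⟩
  rintro ⟨v, hv, rfl⟩
  have hK := nsmul_mem hσ (T.sup k)
  apply hne
  rw [g.act_congr (add_comm _ _) _ (add_mem hv hK), g.act_add_apply hv hK,
    g.act_nsmul_eq_zero_of_le hσ (Finset.le_sup hx) (hk x hx), map_zero]

/-- Cover the exponents of `ℕA ∖ (K • σ + ℕA)` by the cells of Dickson's lemma. -/
lemma exists_affineSubspace_cover_torsion_degrees (hfg : g.FGmod) {σ : Lat d}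
    (hσ : σ ∈ NA a) :
    ∃ P : Finset (AffineSubspace ℂ (CS d)), (∀ A ∈ P, toC σ ∉ A.direction) ∧
      ∀ γ m, m ∈ g.decomp γ → m ≠ 0 → g.IsTorsion σ m → toC γ ∈ ⋃ A ∈ P, (A : Set (CS d)) := by
  obtain ⟨K, Bs, hBs⟩ := g.exists_torsion_degrees hfg hσ
  set I : Set (Fin n → ℕ) := {e | ∃ v ∈ NA a, colComb a e = K • σ + v}
  have hI : IsUpperSet I := by
    rintro e e' hee' ⟨v, hv, hev⟩
    obtain ⟨f, rfl⟩ : ∃ f, e' = e + f := ⟨e' - e, by ext i; simp [hee' i]⟩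
    exact ⟨v + colComb a f, add_mem hv (colComb_mem_NA a f), by rw [map_add, hev, add_assoc]⟩
  obtain ⟨C, hCI, hIC⟩ := hI.exists_finset_cell_cover
  refine ⟨(Bs ×ˢ C).image fun q => AffineSubspace.mk' (toC (q.1 + colComb a q.2.1)) (CFace a q.2.2),
    ?_, fun γ m hm hm0 htor => ?_⟩
  · simp only [Finset.mem_image, Finset.mem_product]
    rintro _ ⟨⟨β, w, S⟩, ⟨-, hc⟩, rfl⟩
    rw [AffineSubspace.direction_mk']
    exact toC_not_mem_CFace_of_disjoint_cell hσ K (hCI _ hc)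
  · obtain ⟨β, hβ, u, hu, rfl, huI⟩ := hBs γ m hm hm0 htor
    obtain ⟨e, rfl⟩ := mem_NA_iff.mp hu
    obtain ⟨c, hc, he⟩ := Set.mem_iUnion₂.mp (hIC huI)
    refine Set.mem_iUnion₂.mpr ⟨_, Finset.mem_image_of_mem _ (Finset.mk_mem_product hβ hc), ?_⟩
    rw [SetLike.mem_coe, AffineSubspace.mem_mk', vsub_eq_sub]
    simpa using toC_colComb_sub_mem_CFace a he

end GradedSAMod

theorem qdegLoc_irreducible_components_general
    {d n : ℕ} (a : Fin n → Lat d)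
    (F G : Set (Fin n)) (hFG : F ⊆ G)
    (M : Type) [AddCommGroup M] [Module ℂ M]
    (g : GradedSAMod a M) (hfg : g.FGmod) :
    (∀ Z : Set (CS d), Z ⊆ g.qdegLoc G →
        (IsIrredComp Z (g.qdegLoc G) ↔ IsIrredComp Z (g.qdegLoc F))) ∧
      g.qdegLoc G ⊆ g.qdegLoc F := by
  rw [g.qdegLoc_eq F, g.qdegLoc_eq G]
  have hGF : zClosure (toC '' g.survTdeg G) ⊆ zClosure (toC '' g.survTdeg F) :=
    zClosure_mono (Set.image_mono (g.survTdeg_anti hFG))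
  obtain ⟨P, hPσ, hP⟩ := g.exists_affineSubspace_cover_torsion_degrees hfg (sigmaF_mem_NA a G)
  have hcover : zClosure (toC '' g.survTdeg F) ⊆
      zClosure (toC '' g.survTdeg G) ∪ ⋃ A ∈ P, (A : Set (CS d)) := by
    refine zClosure_subset ?_ ((isZClosed_zClosure _).union
      (isZClosed_biUnion_finset P fun A _ => isZClosed_affineSubspace A))
    rintro _ ⟨γ, hγ, rfl⟩
    by_cases hγG : γ ∈ g.survTdeg G
    · exact Or.inl (subset_zClosure _ ⟨γ, hγG, rfl⟩)
    · obtain ⟨m, hm, hm0, -⟩ := g.mem_survTdeg_iff.mp hγ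
      exact Or.inr (hP γ m hm hm0 (by_contra fun h => hγG (g.mem_survTdeg_iff.mpr ⟨m, hm, hm0, h⟩)))
  exact ⟨fun Z hZ => isIrredComp_iff_of_subset_union_affineSubspaces (isZClosed_zClosure _)
    (fun x hx z => zClosure_add_smul_mem (g.toC_add_sigmaF_mem G) hx z) hGF P hPσ hcover hZ, hGF⟩

/-- For a finitely generated ℤ^d-graded S_A-module `M` and faces
`F ⪯ G ⪯ A`, a subset `Z ⊆ qdeg M[∂^{−G}]` is an irreducible component of
qdeg M[∂^{−G}] iff it is one of qdeg M[∂^{−F}]; in particular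
qdeg M[∂^{−G}] ⊆ qdeg M[∂^{−F}]. -/
theorem qdegLoc_irreducible_components
    {d n : ℕ} (hd : 0 < d) (hn : 0 < n) (a : Fin n → Lat d)
    (hZA : SpansZ a) (hPt : Pointed a)
    (F G : Set (Fin n)) (hF : IsFace a F) (hG : IsFace a G) (hFG : F ⊆ G)
    (M : Type) [AddCommGroup M] [Module ℂ M]
    (g : GradedSAMod a M) (hfg : g.FGmod) :
    (∀ Z : Set (CS d), Z ⊆ g.qdegLoc G →
        (IsIrredComp Z (g.qdegLoc G) ↔ IsIrredComp Z (g.qdegLoc F))) ∧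
      g.qdegLoc G ⊆ g.qdegLoc F :=
  qdegLoc_irreducible_components_general a F G hFG M g hfg

end

end GKZ
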